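/- arXiv:2401.13788 — 4 statements merged into one kernel-verified Lean document; each statement's English description precedes it below -/
import Mathlib

section
/- The involutive cones of two distinct monomials are either disjoint or one of the monomials involutively divides the other. Equivalently: if the involutive cones C(x^μ) and C(x^ν) have a common element, then x^μ involutively divides x^ν or x^ν involutively divides x^μ. -/
/-
Order the two monomials so that `cls ν ≤ cls μ`. Beyond index `cls μ` both agree with the common
multiple `ρ`, and below it `μ` vanishes, so everything hinges on the exponents at `cls μ`. If
`cls ν < cls μ` then `ν` also agrees with `ρ` there, so `μ ∣ ν` involutively; if the classes are
equal, whichever exponent at the common class is smaller gives the divisor.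
-/

/-- The class of an exponent vector: the least index with nonzero exponent. -/
noncomputable def cls {n : ℕ} (μ : Fin n → ℕ) : ℕ := sInf {i : ℕ | ∃ hi : i < n, μ ⟨i, hi⟩ ≠ 0}

/-- Pommaret involutive divisibility: `μ` divides `ν` and the quotient only
involves the multiplicative variables `x_1, …, x_{cls μ}` of `μ`. -/
def InvDvd {n : ℕ} (μ ν : Fin n → ℕ) : Prop :=
  (∀ i, μ i ≤ ν i) ∧ ∀ i : Fin n, cls μ < (i : ℕ) → ν i = μ i

/-- Membership of a monomial in the monomial ideal generated by `H`. -/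
def MemMonIdeal {n : ℕ} (H : Set (Fin n → ℕ)) (ν : Fin n → ℕ) : Prop :=
  ∃ h ∈ H, ∀ i, h i ≤ ν i

section

variable {n : ℕ} {μ ν ρ : Fin n → ℕ}

lemma apply_eq_zero_of_lt_cls {i : Fin n} (h : (i : ℕ) < cls μ) : μ i = 0 := by
  by_contra hne
  have : cls μ ≤ (i : ℕ) := Nat.sInf_le ⟨i.isLt, hne⟩
  omega

lemma InvDvd.apply_le_of_cls_lt (h₁ : InvDvd μ ρ) (h₂ : InvDvd ν ρ) {i : Fin n}
    (hi : cls ν < (i : ℕ)) : μ i ≤ ν i :=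
  (h₁.1 i).trans (h₂.2 i hi).le

lemma InvDvd.of_cls_le (h₁ : InvDvd μ ρ) (h₂ : InvDvd ν ρ) (hcls : cls ν ≤ cls μ)
    (hle : ∀ i : Fin n, (i : ℕ) = cls μ → μ i ≤ ν i) : InvDvd μ ν := by
  have heq : ∀ i : Fin n, cls μ < (i : ℕ) → ν i = μ i := fun i hi =>
    (h₂.2 i (hcls.trans_lt hi)).symm.trans (h₁.2 i hi)
  refine ⟨fun i => ?_, heq⟩
  rcases lt_trichotomy (i : ℕ) (cls μ) with hi | hi | hi
  · simp [apply_eq_zero_of_lt_cls hi]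
  · exact hle i hi
  · exact (heq i hi).ge

end

/-- If the involutive cones of two monomials have a common element, then one
of the two monomials involutively divides the other. -/
theorem invDvd_of_common_cone_element {n : ℕ} {μ ν ρ : Fin n → ℕ}
    (h₁ : InvDvd μ ρ) (h₂ : InvDvd ν ρ) : InvDvd μ ν ∨ InvDvd ν μ := by
  wlog hcls : cls ν ≤ cls μ generalizing μ ν
  · exact (this h₂ h₁ (le_of_not_ge hcls)).symm
  rcases hcls.lt_or_eq with hlt | hcls_eq
  · exact .inl (h₁.of_cls_le h₂ hcls fun i hi => h₁.apply_le_of_cls_lt h₂ (hi ▸ hlt))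
  by_cases hle : ∀ i : Fin n, (i : ℕ) = cls μ → μ i ≤ ν i
  · exact .inl (h₁.of_cls_le h₂ hcls hle)
  push Not at hle
  obtain ⟨j, hj, hlt⟩ := hle
  refine .inr (h₂.of_cls_le h₁ hcls_eq.ge fun i hi => ?_)
  obtain rfl : i = j := Fin.ext (hi.trans (hcls_eq.trans hj.symm))
  exact hlt.le
end

section
/- Let I be a stable monomial ideal and x^μ ∈ I a monomial. Then there exists a unique minimal monomial generator g of I and a unique monomial h such that x^μ = g·h and every variable x_i dividing h satisfies i ≤ min(g), where min(g) is the index of the smallest variable dividing g. -/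
/-- A set of exponent vectors is (the set of monomials of) a monomial ideal if
it is closed under taking monomial multiples. -/
def IsMonIdeal {n : ℕ} (S : Set (Fin n → ℕ)) : Prop :=
  ∀ μ ∈ S, ∀ ν : Fin n → ℕ, (∀ i, μ i ≤ ν i) → ν ∈ S

/-- The elementary move of stability: replace x^μ by x^μ · x_i / x_{cls μ}. -/
noncomputable def bump {n : ℕ} (μ : Fin n → ℕ) (i : Fin n) : Fin n → ℕ :=
  fun j => if (j : ℕ) = cls μ then μ j - 1 else if j = i then μ j + 1 else μ j

/-- A monomial ideal is stable if for every monomial x^μ in it and every index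
i greater than the class of μ, the monomial x^μ · x_i / x_{cls μ} is in it. -/
def IsStable {n : ℕ} (S : Set (Fin n → ℕ)) : Prop :=
  ∀ μ ∈ S, ∀ i : Fin n, cls μ < (i : ℕ) → bump μ i ∈ S

/-- The minimal monomial generating set: monomials of S not properly divisible
by another monomial of S. -/
def MinGen {n : ℕ} (S : Set (Fin n → ℕ)) : Set (Fin n → ℕ) :=
  {g | g ∈ S ∧ ∀ ν ∈ S, (∀ i, ν i ≤ g i) → ν = g}

/-- A monomial ideal is quasi-stable if it possesses a finite Pommaret basis:
a finite generating set H such that every monomial of the ideal has exactly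
one involutive divisor in H. -/
def IsQuasiStable {n : ℕ} (S : Set (Fin n → ℕ)) : Prop :=
  ∃ H : Finset (Fin n → ℕ), (∀ ν, ν ∈ S ↔ MemMonIdeal ↑H ν) ∧
    ∀ ν ∈ S, ∃! h, h ∈ H ∧ InvDvd h ν

/-!
Give the variable `x_i` the weight `n - i`. A stability move `x^ν ↦ x^ν x_j / x_{cls ν}` with
`j > cls ν` strictly lowers the weight, and so does passing to a proper divisor. Hence a
divisor `g ∈ S` of `x^μ` of least weight is a minimal generator, and `x^μ / g` involves no
variable `x_j` with `j > cls g`, for otherwise a stability move would give a lighter divisor.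
Two minimal generators with this property are comparable under divisibility, hence equal.
-/

namespace StableDecomposition

variable {n : ℕ}

lemma exists_cls_lt_ne_zero {μ : Fin n → ℕ} (h : μ ≠ 0) :
    ∃ hlt : cls μ < n, μ ⟨cls μ, hlt⟩ ≠ 0 := by
  obtain ⟨i, hi⟩ := Function.ne_iff.mp h
  exact Nat.sInf_mem (s := {i : ℕ | ∃ hi : i < n, μ ⟨i, hi⟩ ≠ 0}) ⟨i, i.isLt, hi⟩

lemma cls_le {μ : Fin n → ℕ} {i : Fin n} (h : μ i ≠ 0) : cls μ ≤ i :=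
  Nat.sInf_le ⟨i.isLt, h⟩

lemma eq_zero_of_lt_cls {μ : Fin n → ℕ} {i : Fin n} (h : (i : ℕ) < cls μ) : μ i = 0 := by
  by_contra hne
  exact (cls_le hne).not_gt h

def weight (ν : Fin n → ℕ) : ℕ := ∑ i : Fin n, (n - i) * ν i

lemma weight_add (ν ν' : Fin n → ℕ) : weight (ν + ν') = weight ν + weight ν' := by
  simp only [weight, Pi.add_apply, mul_add, Finset.sum_add_distrib]

lemma weight_single (k : Fin n) : weight (Pi.single k 1) = n - k := by
  simp [weight, Pi.single_apply]

lemma weight_lt_of_lt {ν μ : Fin n → ℕ} (h : ν < μ) : weight ν < weight μ := by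
  obtain ⟨i, hi⟩ := Pi.lt_def.mp h |>.2
  refine Finset.sum_lt_sum (fun j _ => Nat.mul_le_mul_left _ (h.le j)) ⟨i, Finset.mem_univ _, ?_⟩
  exact Nat.mul_lt_mul_of_pos_left hi (by omega)

lemma bump_add_single {ν : Fin n → ℕ} {c j : Fin n} (hc : (c : ℕ) = cls ν) (hνc : ν c ≠ 0)
    (hj : cls ν < j) : bump ν j + Pi.single c 1 = ν + Pi.single j 1 := by
  funext k
  have hk : k = c ↔ (k : ℕ) = cls ν := by rw [Fin.ext_iff, hc]
  simp only [bump, Pi.add_apply, Pi.single_apply, hk]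
  split_ifs with hkc hkj
  · subst hkj; omega
  · obtain rfl : k = c := hk.mpr hkc
    omega
  · rfl
  · rfl

lemma weight_bump_lt {ν : Fin n → ℕ} (hν : ν ≠ 0) {j : Fin n} (hj : cls ν < j) :
    weight (bump ν j) < weight ν := by
  obtain ⟨hcn, hc⟩ := exists_cls_lt_ne_zero hν
  have key := congrArg weight (bump_add_single (c := ⟨cls ν, hcn⟩) rfl hc hj)
  rw [weight_add, weight_add, weight_single, weight_single] at key
  simp only at key
  omega

lemma bump_le {ν μ : Fin n → ℕ} (hle : ν ≤ μ) {j : Fin n} (hj : cls ν < j) (hlt : ν j < μ j) :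
    bump ν j ≤ μ := by
  intro k
  have : ν k ≤ μ k := hle k
  simp only [bump]
  split_ifs with hkc hkj
  · omega
  · subst hkj; omega
  · exact this

theorem exists_mem_minGen_invDvd {S : Set (Fin n → ℕ)} (h0 : (0 : Fin n → ℕ) ∉ S)
    (hst : IsStable S) {μ : Fin n → ℕ} (hμ : μ ∈ S) : ∃ g ∈ MinGen S, InvDvd g μ := by
  set T : Set (Fin n → ℕ) := {ν | ν ∈ S ∧ ν ≤ μ}
  have hT : T.Nonempty := ⟨μ, hμ, le_rfl⟩
  obtain ⟨hgS, hgμ⟩ : Function.argminOn weight T hT ∈ T := Function.argminOn_mem _ _ _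
  set g := Function.argminOn weight T hT
  have lightest : ∀ ν ∈ S, ν ≤ μ → ¬weight ν < weight g :=
    fun ν hνS hνμ => Function.not_lt_argminOn weight T ⟨hνS, hνμ⟩
  refine ⟨g, ⟨hgS, fun ν hνS hνg => ?_⟩, hgμ, fun j hj => ?_⟩
  · by_contra hne
    exact lightest ν hνS (le_trans hνg hgμ) (weight_lt_of_lt (lt_of_le_of_ne hνg hne))
  · by_contra hne
    have hlt : g j < μ j := lt_of_le_of_ne (hgμ j) (Ne.symm hne)
    have hg0 : g ≠ 0 := fun h => h0 (h ▸ hgS)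
    exact lightest _ (hst g hgS j hj) (bump_le hgμ hj hlt) (weight_bump_lt hg0 hj)

lemma le_of_invDvd_of_cls_le {a b μ : Fin n → ℕ} (ha : InvDvd a μ) (hb : b ≤ μ)
    (hcls : cls a ≤ cls b) (hat : ∀ i : Fin n, (i : ℕ) = cls a → b i ≤ a i) : b ≤ a := by
  intro i
  rcases lt_trichotomy (i : ℕ) (cls a) with hlt | heq | hgt
  · rw [eq_zero_of_lt_cls (hlt.trans_le hcls)]
    exact Nat.zero_le _
  · exact hat i heq
  · rw [← ha.2 i hgt]
    exact hb i

lemma eq_of_invDvd_of_cls_le {S : Set (Fin n → ℕ)} {a b μ : Fin n → ℕ} (ha : a ∈ MinGen S)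
    (hb : b ∈ MinGen S) (haμ : InvDvd a μ) (hbμ : InvDvd b μ) (hcls : cls a ≤ cls b) : a = b := by
  by_cases hat : ∀ i : Fin n, (i : ℕ) = cls a → b i ≤ a i
  · exact (ha.2 b hb.1 (le_of_invDvd_of_cls_le haμ hbμ.1 hcls hat)).symm
  push Not at hat
  obtain ⟨i, hi, hlt⟩ := hat
  -- `b` does not vanish at `cls a`
  have hcls' : cls b = cls a := le_antisymm (hi ▸ cls_le (by omega)) hcls
  refine hb.2 a ha.1 (le_of_invDvd_of_cls_le hbμ haμ.1 hcls'.le fun k hk => ?_)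
  rw [Fin.ext (hk.trans (hcls'.trans hi.symm))]
  exact hlt.le

lemma eq_of_mem_minGen_of_invDvd {S : Set (Fin n → ℕ)} {a b μ : Fin n → ℕ} (ha : a ∈ MinGen S)
    (hb : b ∈ MinGen S) (haμ : InvDvd a μ) (hbμ : InvDvd b μ) : a = b :=
  (le_total (cls a) (cls b)).elim (eq_of_invDvd_of_cls_le ha hb haμ hbμ)
    fun h => (eq_of_invDvd_of_cls_le hb ha hbμ haμ h).symm

lemma decomposition_iff_invDvd {g h μ : Fin n → ℕ} :
    ((∀ i, μ i = g i + h i) ∧ ∀ i : Fin n, h i ≠ 0 → (i : ℕ) ≤ cls g) ↔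
      InvDvd g μ ∧ h = μ - g := by
  constructor
  · rintro ⟨hsum, hsupp⟩
    have hh : ∀ i : Fin n, cls g < i → h i = 0 := fun i hi => by
      by_contra hne
      exact (hsupp i hne).not_gt hi
    refine ⟨⟨fun i => by have := hsum i; omega,
      fun i hi => by have := hsum i; have := hh i hi; omega⟩, ?_⟩
    funext i
    simp only [Pi.sub_apply, hsum i, Nat.add_sub_cancel_left]
  · rintro ⟨⟨hle, heq⟩, rfl⟩
    refine ⟨fun i => by have := hle i; simp only [Pi.sub_apply]; omega, fun i hi => ?_⟩
    by_contra hlt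
    exact hi (by simp only [Pi.sub_apply, heq i (not_le.mp hlt), Nat.sub_self])

end StableDecomposition

open StableDecomposition in
theorem stable_unique_decomposition_general {n : ℕ} (S : Set (Fin n → ℕ))
    (h0 : (0 : Fin n → ℕ) ∉ S) (hst : IsStable S)
    (μ : Fin n → ℕ) (hμ : μ ∈ S) :
    ∃! p : (Fin n → ℕ) × (Fin n → ℕ), p.1 ∈ MinGen S ∧
      (∀ i, μ i = p.1 i + p.2 i) ∧
      ∀ i : Fin n, p.2 i ≠ 0 → (i : ℕ) ≤ cls p.1 := by
  obtain ⟨g, hg, hgμ⟩ := exists_mem_minGen_invDvd h0 hst hμ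
  refine ⟨(g, μ - g), ⟨hg, decomposition_iff_invDvd.mpr ⟨hgμ, rfl⟩⟩, ?_⟩
  rintro ⟨g', h'⟩ ⟨hg', hdec⟩
  obtain ⟨hg'μ, rfl⟩ : InvDvd g' μ ∧ h' = μ - g' := decomposition_iff_invDvd.mp hdec
  rw [eq_of_mem_minGen_of_invDvd (a := g') hg' hg hg'μ hgμ]

/-- For a stable monomial ideal S and a monomial x^μ ∈ S, there is a unique
pair (g, h) with g a minimal generator of S, x^μ = g · h, and every variable
x_i dividing h satisfying i ≤ min(g). -/
theorem stable_unique_decomposition {n : ℕ} (S : Set (Fin n → ℕ))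
    (hS : IsMonIdeal S) (h0 : (0 : Fin n → ℕ) ∉ S) (hst : IsStable S)
    (μ : Fin n → ℕ) (hμ : μ ∈ S) :
    ∃! p : (Fin n → ℕ) × (Fin n → ℕ), p.1 ∈ MinGen S ∧
      (∀ i, μ i = p.1 i + p.2 i) ∧
      ∀ i : Fin n, p.2 i ≠ 0 → (i : ℕ) ≤ cls p.1 :=
  stable_unique_decomposition_general S h0 hst μ hμ
end

section
/- The decomposition function of a quasi-stable ideal with respect to its Pommaret basis is regular: if H is a Pommaret basis, b : M(I) → H assigns to each monomial of I its unique involutive divisor in H, and set(h) denotes the set of non-multiplicative variables of h, then for every h ∈ H and every x_t ∈ set(h), one has set(b(x_t·h)) ⊆ set(h). -/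
/-- The exponent vector of `x_t · μ`. -/
def mulVar {n : ℕ} (t : Fin n) (μ : Fin n → ℕ) : Fin n → ℕ :=
  fun i => if i = t then μ i + 1 else μ i

section Class

variable {n : ℕ} {μ ν : Fin n → ℕ}

theorem cls_le_of_ne_zero {i : Fin n} (hi : μ i ≠ 0) : cls μ ≤ i :=
  Nat.sInf_le ⟨i.isLt, hi⟩

theorem exists_ne_zero_at_cls (hμ : μ ≠ 0) : ∃ hi : cls μ < n, μ ⟨cls μ, hi⟩ ≠ 0 := by
  obtain ⟨i, hi⟩ := Function.ne_iff.mp hμ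
  exact Nat.sInf_mem (s := {j : ℕ | ∃ hj : j < n, μ ⟨j, hj⟩ ≠ 0}) ⟨i, i.isLt, hi⟩

theorem cls_zero : cls (0 : Fin n → ℕ) = 0 := by
  simp [cls]

theorem cls_le_cls_of_le (hle : ∀ i, μ i ≤ ν i) (hμ : μ ≠ 0) : cls ν ≤ cls μ := by
  obtain ⟨hlt, hne⟩ := exists_ne_zero_at_cls hμ
  exact cls_le_of_ne_zero (i := ⟨cls μ, hlt⟩) (by have := hle ⟨cls μ, hlt⟩; omega)

theorem le_cls_mulVar {t : Fin n} (ht : cls μ ≤ t) : cls μ ≤ cls (mulVar t μ) := by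
  have hne : mulVar t μ ≠ 0 := Function.ne_iff.mpr ⟨t, by simp [mulVar]⟩
  obtain ⟨hlt, hj⟩ := exists_ne_zero_at_cls hne
  by_cases hjt : (⟨cls (mulVar t μ), hlt⟩ : Fin n) = t
  · rwa [← hjt] at ht
  · simp only [mulVar, if_neg hjt] at hj
    exact cls_le_of_ne_zero hj

theorem ne_zero_of_invDvd (hdvd : InvDvd μ ν) {i : Fin n} (hi : 0 < (i : ℕ)) (hν : ν i ≠ 0) :
    μ ≠ 0 := by
  rintro rfl
  exact hν (hdvd.2 i (cls_zero.symm ▸ hi))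

end Class

theorem decomposition_function_regular_general {n : ℕ}
    (h : Fin n → ℕ) (t : Fin n) (ht : cls h < (t : ℕ))
    (h' : Fin n → ℕ)
    (hdiv : InvDvd h' (fun i => if i = t then h i + 1 else h i)) :
    {i : Fin n | cls h' < (i : ℕ)} ⊆ {i : Fin n | cls h < (i : ℕ)} := by
  intro i hi
  have hh' : h' ≠ 0 :=
    ne_zero_of_invDvd (ν := mulVar t h) hdiv (Nat.zero_le _ |>.trans_lt ht) (by simp [mulVar])
  exact (le_cls_mulVar ht.le).trans_lt ((cls_le_cls_of_le (ν := mulVar t h) hdiv.1 hh').trans_lt hi)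

/-- The decomposition function of a quasi-stable ideal with respect to its
Pommaret basis is regular: if h ∈ H, x_t is a non-multiplicative variable of
h, and h' = b(x_t · h) is the unique involutive divisor in H of x_t · h, then
the non-multiplicative variables of h' form a subset of those of h. -/
theorem decomposition_function_regular {n : ℕ} (H : Finset (Fin n → ℕ))
    (hPB : ∀ ν, MemMonIdeal ↑H ν → ∃! g, g ∈ H ∧ InvDvd g ν)
    (h : Fin n → ℕ) (hh : h ∈ H) (t : Fin n) (ht : cls h < (t : ℕ))
    (h' : Fin n → ℕ) (hh' : h' ∈ H)
    (hdiv : InvDvd h' (fun i => if i = t then h i + 1 else h i)) :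
    {i : Fin n | cls h' < (i : ℕ)} ⊆ {i : Fin n | cls h < (i : ℕ)} :=
  decomposition_function_regular_general h t ht h' hdiv
end

section
/- A quasi-stable monomial ideal has linear quotients with respect to any P-ordering of its Pommaret basis: if H = (h_1,...,h_r) is P-ordered, then for each j, the colon ideal ⟨h_1's successors⟩ : ⟨h_j⟩ (in the iterated construction) is generated by a subset of the variables. -/
/-- Lexicographic comparison of exponent vectors: μ < ν if at the largest
index where they differ, the exponent of μ is smaller. -/
def LexLt {n : ℕ} (μ ν : Fin n → ℕ) : Prop :=
  ∃ k : Fin n, μ k < ν k ∧ ∀ j : Fin n, k < j → μ j = ν j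

/-- A P-ordering: sorted first by class, then lexicographically within each
class. -/
def POrdered {n r : ℕ} (h : Fin r → (Fin n → ℕ)) : Prop :=
  ∀ a b : Fin r, a < b →
    cls (h a) < cls (h b) ∨ (cls (h a) = cls (h b) ∧ LexLt (h a) (h b))


/-!
If `x_k` is non-multiplicative for `h_α`, the involutive divisor of `x_k h_α` must come after `h_α`
in the P-ordering: an earlier generator would have the same class as `h_α` and be lexicographically
larger than it. So the colon ideal is generated by the non-multiplicative variables of `h_α`.
Conversely, if some later `h_β` divides `ν h_α`, then the latest generator dividing `ν h_α` is an
involutive divisor of it (otherwise the first step produces an even later one), so by uniqueness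
`ν h_α` is not involutively divisible by `h_α`, i.e. `ν` involves a non-multiplicative variable.
-/

section Cls

variable {n : ℕ}

theorem eq_zero_of_lt_cls {μ : Fin n → ℕ} {i : Fin n} (hi : (i : ℕ) < cls μ) : μ i = 0 := by
  by_contra hne
  exact absurd (Nat.sInf_le ⟨i.2, hne⟩ : cls μ ≤ i) (not_le.2 hi)

theorem le_cls_of_eq_zero {μ : Fin n → ℕ} {c : ℕ} {k : Fin n} (hk : μ k ≠ 0)
    (hzero : ∀ i : Fin n, (i : ℕ) < c → μ i = 0) : c ≤ cls μ := by
  obtain ⟨hlt, hne⟩ := Nat.sInf_mem (s := {i : ℕ | ∃ hi : i < n, μ ⟨i, hi⟩ ≠ 0}) ⟨k, k.2, hk⟩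
  by_contra! hcls
  exact hne (hzero _ hcls)

end Cls

theorem LexLt.asymm {n : ℕ} {μ ν : Fin n → ℕ} (hμν : LexLt μ ν) : ¬LexLt ν μ := by
  rintro ⟨l, hl, hl_eq⟩
  obtain ⟨k, hk, hk_eq⟩ := hμν
  rcases lt_trichotomy k l with hkl | rfl | hlk
  · exact absurd (hk_eq l hkl) hl.ne'
  · omega
  · exact absurd (hl_eq k hlk) hk.ne'

namespace POrdered

variable {n r : ℕ} {h : Fin r → (Fin n → ℕ)}

theorem cls_le (hord : POrdered h) {a b : Fin r} (hab : a ≤ b) : cls (h a) ≤ cls (h b) := by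
  rcases hab.lt_or_eq with hlt | rfl
  · rcases hord a b hlt with hc | ⟨hc, -⟩ <;> omega
  · rfl

theorem lexLt_of_cls_eq (hord : POrdered h) {a b : Fin r} (hab : a < b)
    (hc : cls (h a) = cls (h b)) : LexLt (h a) (h b) := by
  rcases hord a b hab with hlt | ⟨-, hlex⟩
  · omega
  · exact hlex

theorem ne_of_lt (hord : POrdered h) {a b : Fin r} (hab : a < b) : h a ≠ h b := by
  intro heq
  rcases hord a b hab with hc | ⟨-, hlex⟩
  · rw [heq] at hc
    exact hc.false
  · rw [heq] at hlex
    exact hlex.asymm hlex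

end POrdered

theorem single_one_add_le {n : ℕ} {f μ : Fin n → ℕ} {k : Fin n} (hle : f ≤ μ) (hk : f k < μ k) :
    Pi.single k 1 + f ≤ μ := by
  intro i
  by_cases hik : i = k
  · subst hik
    simpa [add_comm] using hk
  · simpa [Pi.single_apply, hik] using hle i

def IsPommaretBasis {n r : ℕ} (h : Fin r → (Fin n → ℕ)) : Prop :=
  ∀ ν, MemMonIdeal (Set.range h) ν → ∃! g, g ∈ Set.range h ∧ InvDvd g ν

namespace IsPommaretBasis

variable {n r : ℕ} {h : Fin r → (Fin n → ℕ)}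

theorem exists_invDvd (hPB : IsPommaretBasis h) {a : Fin r} {μ : Fin n → ℕ} (ha : h a ≤ μ) :
    ∃ c, InvDvd (h c) μ := by
  obtain ⟨-, ⟨⟨c, rfl⟩, hc⟩, -⟩ := hPB μ ⟨h a, ⟨a, rfl⟩, ha⟩
  exact ⟨c, hc⟩

theorem eq_of_invDvd (hPB : IsPommaretBasis h) {a b : Fin r} {μ : Fin n → ℕ}
    (ha : InvDvd (h a) μ) (hb : InvDvd (h b) μ) : h a = h b :=
  (hPB μ ⟨h a, ⟨a, rfl⟩, ha.1⟩).unique ⟨⟨a, rfl⟩, ha⟩ ⟨⟨b, rfl⟩, hb⟩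

theorem exists_gt_le_single_add (hPB : IsPommaretBasis h) (hord : POrdered h) {α : Fin r}
    {k : Fin n} (hk : cls (h α) < k) : ∃ γ, α < γ ∧ h γ ≤ Pi.single k 1 + h α := by
  set m : Fin n → ℕ := Pi.single k 1 + h α
  have hm_of_ne : ∀ i, i ≠ k → m i = h α i := fun i hi => by simp [m, hi]
  obtain ⟨γ, hγ⟩ := hPB.exists_invDvd (a := α) (μ := m) le_add_self
  refine ⟨γ, ?_, hγ.1⟩
  by_contra! hγα
  have hγk : h γ k = h α k + 1 := by
    rw [← hγ.2 k ((hord.cls_le hγα).trans_lt hk)]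
    simp [m, add_comm]
  rcases hγα.lt_or_eq with hlt | rfl
  · have hcls : cls (h γ) = cls (h α) := by
      refine (hord.cls_le hγα).antisymm (le_cls_of_eq_zero (k := k) (by omega) fun i hi => ?_)
      have hik : i ≠ k := fun hik => by subst hik; omega
      have := hγ.1 i
      rw [hm_of_ne i hik, eq_zero_of_lt_cls hi] at this
      omega
    refine (hord.lexLt_of_cls_eq hlt hcls).asymm ⟨k, by omega, fun j hkj => ?_⟩
    rw [← hγ.2 j (by rw [hcls]; exact hk.trans hkj), hm_of_ne j hkj.ne']
  · omega

theorem exists_ge_invDvd (hPB : IsPommaretBasis h) (hord : POrdered h) {β : Fin r}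
    {μ : Fin n → ℕ} (hβ : h β ≤ μ) : ∃ γ, β ≤ γ ∧ InvDvd (h γ) μ := by
  classical
  obtain ⟨γ, hγ, hmax⟩ := (Finset.univ.filter fun c => β ≤ c ∧ h c ≤ μ).exists_max_image id
    ⟨β, by simp [hβ]⟩
  simp only [Finset.mem_filter, Finset.mem_univ, true_and, id] at hγ hmax
  refine ⟨γ, hγ.1, hγ.2, ?_⟩
  by_contra! hnot
  obtain ⟨k, hk, hne⟩ := hnot
  obtain ⟨δ, hγδ, hδ⟩ := hPB.exists_gt_le_single_add hord hk
  have hδμ : h δ ≤ μ := hδ.trans (single_one_add_le hγ.2 ((hγ.2 k).lt_of_ne hne.symm))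
  exact (hmax δ ⟨hγ.1.trans hγδ.le, hδμ⟩).not_gt hγδ

end IsPommaretBasis

/-- A quasi-stable ideal has linear quotients with respect to a P-ordering of
its Pommaret basis: each colon ideal in the iterated construction is generated
by a subset of the variables (stated via membership of monomials). -/
theorem linear_quotients_of_pommaret {n r : ℕ} (h : Fin r → (Fin n → ℕ))
    (hPB : ∀ ν, MemMonIdeal (Set.range h) ν →
      ∃! g, g ∈ Set.range h ∧ InvDvd g ν)
    (hord : POrdered h) (α : Fin r) :
    ∃ V : Set (Fin n), ∀ ν : Fin n → ℕ,
      (∃ β : Fin r, α < β ∧ ∀ i, h β i ≤ ν i + h α i) ↔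
      ∃ i ∈ V, 0 < ν i := by
  have hPB : IsPommaretBasis h := hPB
  refine ⟨{k | cls (h α) < k}, fun ν => ⟨fun ⟨β, hαβ, hβ⟩ => ?_, fun ⟨k, hk, hνk⟩ => ?_⟩⟩
  · by_contra! hmult
    have hα : InvDvd (h α) (ν + h α) :=
      ⟨fun _ => Nat.le_add_left _ _, fun i hi => by simp [Nat.le_zero.mp (hmult i hi)]⟩
    obtain ⟨γ, hβγ, hγ⟩ := hPB.exists_ge_invDvd hord hβ
    exact hord.ne_of_lt (hαβ.trans_le hβγ) (hPB.eq_of_invDvd hα hγ)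
  · obtain ⟨γ, hαγ, hγ⟩ := hPB.exists_gt_le_single_add hord hk
    exact ⟨γ, hαγ, hγ.trans (single_one_add_le le_add_self (Nat.lt_add_of_pos_left hνk))⟩
end
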